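/- If C₁, …, C_k are red-ended coloured-intervals and B₁, …, B_{k−1} are blue intervals, then r(C₁ + B₁ + C₂ + … + B_{k−1} + C_k) ≤ 2^{⌈log₂ k⌉} · Σ_{i=1}^{k} r(C_i). -/

import Mathlib

open scoped Classical

/-- A recolouring step: the configuration (list of lengths of monochromatic intervals,
with colours alternating, determined by the colour of the first interval) contains three
consecutive intervals of lengths `a`, `b`, `c`, and the middle one, being strictly shorter
than both neighbours, is recoloured, merging the three into one of length `a + b + c`. -/
structure Step where
  pre : List ℝ
  a : ℝ
  b : ℝ
  c : ℝ
  post : List ℝ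

namespace Step

/-- The configuration before the recolouring step. -/
def src (s : Step) : List ℝ := s.pre ++ s.a :: s.b :: s.c :: s.post

/-- The configuration after the recolouring step. -/
def tgt (s : Step) : List ℝ := s.pre ++ (s.a + s.b + s.c) :: s.post

/-- A step is valid if the middle interval is strictly shorter than both neighbours. -/
def Valid (s : Step) : Prop := s.b < s.a ∧ s.b < s.c

/-- The set of points (identifying a configuration with a partition of `(0, total length]`
into half-open intervals) that get recoloured by the step: the middle interval. -/
def middle (s : Step) : Set ℝ :=
  Set.Ioc (s.pre.sum + s.a) (s.pre.sum + s.a + s.b)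

end Step

/-- `Reduces l steps m`: starting from configuration `l`, performing the given sequence of
valid recolouring steps yields configuration `m`. -/
inductive Reduces : List ℝ → List Step → List ℝ → Prop
  | nil (l : List ℝ) : Reduces l [] l
  | cons (s : Step) (hs : s.Valid) {steps : List Step} {m : List ℝ} :
      Reduces s.tgt steps m → Reduces s.src (s :: steps) m

/-- A configuration is closed if no further recolouring is possible; a sequence of
recolourings ending in a closed configuration is complete. -/
def IsClosedConfig (l : List ℝ) : Prop := ∀ s : Step, s.Valid → s.src ≠ l

/-- The number of times the point `x` is recoloured during a sequence of steps. -/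
noncomputable def recolourCount (steps : List Step) (x : ℝ) : ℕ :=
  (steps.filter fun s => decide (x ∈ s.middle)).length

/-- Non-degeneracy: with `p_i` the boundary points (partial sums of the lengths),
no two gap-distances coincide, i.e. `p_j - p_i ≠ p_k - p_j` for `i < j < k`. -/
def Nondegenerate (l : List ℝ) : Prop :=
  ∀ i j k : ℕ, i < j → j < k → k ≤ l.length →
    (l.take j).sum - (l.take i).sum ≠ (l.take k).sum - (l.take j).sum

/-- For a red-ended configuration (a list of lengths of odd length, the intervals at even
indices being red and those at odd indices blue), the total length of the red intervals. -/
def redSum (l : List ℝ) : ℝ :=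
  ∑ i ∈ Finset.range l.length, if i % 2 = 0 then l.getD i 0 else 0

/-- Interleave red-ended blocks `cs` with separating blue intervals `bs`:
`C₁ + B₁ + C₂ + … + B_{k-1} + C_k`. -/
def interleave : List (List ℝ) → List ℝ → List ℝ
  | [], _ => []
  | c :: _, [] => c
  | c :: cs, b :: bs => c ++ b :: interleave cs bs


/-!
Recolouring terminates (each step shortens a configuration by two) and, on positive lengths,
is locally confluent, so every configuration `C` has a unique closure `[C]`; in particular
`[[C₁] + B + [C₂]] = [C₁ + B + C₂]`. If `C₋` and `C₊` are closed and red-ended, every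
recolouring of `C₋ + B + C₊` involves the interval grown from `B`, and whenever that interval
is red its length is at most twice the red length it has swallowed; hence
`r(C₋ + B + C₊) ≤ 2 r(C₋) + 2 r(C₊)`. Splitting `C₁ + B₁ + ⋯ + C_k` into two halves of at most
`2ⁿ` blocks each and inducting on `n` gives the factor `2 ^ ⌈log₂ k⌉`.
-/

open Relation

def blueSum (l : List ℝ) : ℝ :=
  ∑ i ∈ Finset.range l.length, if i % 2 = 1 then l.getD i 0 else 0

@[simp] theorem redSum_nil : redSum [] = 0 := rfl

@[simp] theorem blueSum_nil : blueSum [] = 0 := rfl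

theorem redSum_cons (x : ℝ) (l : List ℝ) : redSum (x :: l) = x + blueSum l := by
  rw [redSum, blueSum, List.length_cons, Finset.sum_range_succ', add_comm]
  simp [Nat.succ_mod_two_eq_zero_iff]

theorem blueSum_cons (x : ℝ) (l : List ℝ) : blueSum (x :: l) = redSum l := by
  rw [redSum, blueSum, List.length_cons, Finset.sum_range_succ']
  simp [Nat.succ_mod_two_eq_one_iff]

theorem redSum_append : ∀ l₁ l₂ : List ℝ,
    redSum (l₁ ++ l₂) = redSum l₁ + if l₁.length % 2 = 0 then redSum l₂ else blueSum l₂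
  | [], _ => by simp
  | [x], l₂ => by simp [redSum_cons]
  | x :: y :: l₁, l₂ => by
    have hpar : (l₁.length + 1 + 1) % 2 = l₁.length % 2 := by omega
    simp only [List.cons_append, redSum_cons, blueSum_cons, redSum_append l₁ l₂,
      List.length_cons, hpar]
    ring

theorem redSum_nonneg {l : List ℝ} (hl : ∀ x ∈ l, 0 ≤ x) : 0 ≤ redSum l :=
  Finset.sum_nonneg fun i hi => by
    split_ifs
    · rw [List.getD_eq_getElem _ _ (Finset.mem_range.1 hi)]
      exact hl _ (List.getElem_mem _)
    · rfl

theorem blueSum_nonneg {l : List ℝ} (hl : ∀ x ∈ l, 0 ≤ x) : 0 ≤ blueSum l := by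
  have := redSum_nonneg (l := 0 :: l) (List.forall_mem_cons.2 ⟨le_rfl, hl⟩)
  rwa [redSum_cons, zero_add] at this

theorem append_cons_eq_window_cases {α : Type*} {A D P Q : List α} {M a b c : α}
    (h : A ++ M :: D = P ++ a :: b :: c :: Q) :
    (∃ E, A = P ++ a :: b :: c :: E ∧ Q = E ++ M :: D) ∨
    (A = P ++ [a, b] ∧ M = c ∧ D = Q) ∨
    (A = P ++ [a] ∧ M = b ∧ D = c :: Q) ∨
    (A = P ∧ M = a ∧ D = b :: c :: Q) ∨
    (∃ E, P = A ++ M :: E ∧ D = E ++ a :: b :: c :: Q) := by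
  rcases List.append_eq_append_iff.1 h with
    ⟨_ | ⟨x, E⟩, rfl, h'⟩ | ⟨_ | ⟨x, _ | ⟨y, _ | ⟨z, E⟩⟩⟩, rfl, h'⟩ <;> clear h <;> grind

namespace Step

theorem pos_tgt {s : Step} (h : ∀ x ∈ s.src, 0 < x) : ∀ x ∈ s.tgt, 0 < x := by
  obtain ⟨P, a, b, c, Q⟩ := s
  simp only [src, tgt, List.mem_append, List.mem_cons] at h ⊢
  rintro x (hx | rfl | hx)
  · exact h x (.inl hx)
  · linarith [h a (by simp), h b (by simp), h c (by simp)]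
  · exact h x (by simp [hx])

theorem length_tgt_add_two (s : Step) : s.tgt.length + 2 = s.src.length := by
  simp only [src, tgt, List.length_append, List.length_cons]
  omega

end Step

namespace Reduces

variable {l m n : List ℝ} {steps : List Step}

theorem append {steps' : List Step} (h : Reduces l steps m) (h' : Reduces m steps' n) :
    Reduces l (steps ++ steps') n := by
  induction h with
  | nil => exact h'
  | cons s hs _ ih => exact .cons s hs (ih h')

theorem pos (h : Reduces l steps m) (hl : ∀ x ∈ l, 0 < x) : ∀ x ∈ m, 0 < x := by
  induction h with
  | nil => exact hl
  | cons s _ _ ih => exact ih (Step.pos_tgt hl)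

theorem length_mod_two (h : Reduces l steps m) : m.length % 2 = l.length % 2 := by
  induction h with
  | nil => rfl
  | cons s _ _ ih => have := s.length_tgt_add_two; omega

theorem exists_frame (X Z : List ℝ) (h : Reduces l steps m) :
    ∃ steps', Reduces (X ++ l ++ Z) steps' (X ++ m ++ Z) := by
  induction h with
  | nil => exact ⟨[], .nil _⟩
  | cons s hs _ ih =>
    obtain ⟨steps', h'⟩ := ih
    let s' : Step := ⟨X ++ s.pre, s.a, s.b, s.c, s.post ++ Z⟩
    have := Reduces.cons s' hs (by simpa [s', Step.tgt] using h')
    exact ⟨s' :: steps', by simpa [s', Step.src] using this⟩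

end Reduces

/-- `m` is the closure `[l]` of `l` in the paper's notation. -/
def IsClosure (l m : List ℝ) : Prop :=
  ∃ steps : List Step, Reduces l steps m ∧ IsClosedConfig m

theorem exists_isClosure (l : List ℝ) : ∃ m, IsClosure l m := by
  by_cases hl : IsClosedConfig l
  · exact ⟨l, [], .nil l, hl⟩
  · obtain ⟨s, hs, rfl⟩ : ∃ s : Step, s.Valid ∧ s.src = l := by
      simpa [IsClosedConfig] using hl
    have := s.length_tgt_add_two
    obtain ⟨m, steps, h, hm⟩ := exists_isClosure s.tgt
    exact ⟨m, s :: steps, .cons s hs h, hm⟩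
termination_by l.length

theorem IsClosure.pos {l m : List ℝ} (h : IsClosure l m) (hl : ∀ x ∈ l, 0 < x) :
    ∀ x ∈ m, 0 < x := by
  obtain ⟨_, hr, -⟩ := h
  exact hr.pos hl

/-- Positivity is part of the relation because local confluence fails without it. -/
def Recolours (l m : List ℝ) : Prop :=
  (∀ x ∈ l, 0 < x) ∧ ∃ s : Step, s.Valid ∧ s.src = l ∧ s.tgt = m

theorem Recolours.of_lt {P Q : List ℝ} {a b c : ℝ} (hpos : ∀ x ∈ P ++ a :: b :: c :: Q, 0 < x)
    (hba : b < a) (hbc : b < c) : Recolours (P ++ a :: b :: c :: Q) (P ++ (a + b + c) :: Q) :=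
  ⟨hpos, ⟨P, a, b, c, Q⟩, ⟨hba, hbc⟩, rfl, rfl⟩

theorem Reduces.reflTransGen_recolours {l m : List ℝ} {steps : List Step}
    (h : Reduces l steps m) (hl : ∀ x ∈ l, 0 < x) : ReflTransGen Recolours l m := by
  induction h with
  | nil => exact .refl
  | cons s hs _ ih => exact .head ⟨hl, s, hs, rfl, rfl⟩ (ih (Step.pos_tgt hl))

theorem IsClosedConfig.eq_of_reflTransGen {l m : List ℝ} (hl : IsClosedConfig l)
    (h : ReflTransGen Recolours l m) : l = m := by
  rcases h.cases_head with rfl | ⟨_, ⟨-, s, hs, rfl, -⟩, -⟩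
  · rfl
  · exact absurd rfl (hl s hs)

/-- Two valid windows of one configuration either coincide, are disjoint, or share an end
interval; windows overlapping in two intervals cannot both be valid. -/
theorem Step.exists_join {s₁ s₂ : Step} (hv₁ : s₁.Valid) (hv₂ : s₂.Valid)
    (hsrc : s₁.src = s₂.src) (hpos : ∀ x ∈ s₁.src, 0 < x)
    (hle : s₁.pre.length ≤ s₂.pre.length) :
    ∃ d, ReflGen Recolours s₁.tgt d ∧ ReflGen Recolours s₂.tgt d := by
  have hpos₁ := Step.pos_tgt hpos
  have hpos₂ := Step.pos_tgt (hsrc ▸ hpos)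
  obtain ⟨P₁, a₁, b₁, c₁, Q₁⟩ := s₁
  obtain ⟨P₂, a₂, b₂, c₂, Q₂⟩ := s₂
  obtain ⟨hba₁, hbc₁⟩ := hv₁
  obtain ⟨hba₂, hbc₂⟩ := hv₂
  simp only [Step.src, Step.tgt] at *
  rcases append_cons_eq_window_cases hsrc.symm with
    ⟨E, rfl, rfl⟩ | ⟨rfl, rfl, h⟩ | ⟨rfl, rfl, h⟩ | ⟨rfl, rfl, h⟩ | ⟨E, rfl, -⟩
  · refine ⟨P₁ ++ (a₁ + b₁ + c₁) :: E ++ (a₂ + b₂ + c₂) :: Q₂, .single ?_, .single ?_⟩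
    · simpa using
        Recolours.of_lt (P := P₁ ++ (a₁ + b₁ + c₁) :: E) (by simpa using hpos₁) hba₂ hbc₂
    · simpa using
        Recolours.of_lt (Q := E ++ (a₂ + b₂ + c₂) :: Q₂) (by simpa using hpos₂) hba₁ hbc₁
  · subst h
    have : 0 < a₁ ∧ 0 < b₁ ∧ 0 < b₂ ∧ 0 < c₂ :=
      ⟨hpos _ (by simp), hpos _ (by simp), hpos _ (by simp), hpos _ (by simp)⟩
    refine ⟨P₁ ++ (a₁ + b₁ + a₂ + b₂ + c₂) :: Q₂, .single ?_, .single ?_⟩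
    · exact Recolours.of_lt hpos₁ (by linarith) hbc₂
    · simpa [add_assoc] using
        Recolours.of_lt (P := P₁) (c := a₂ + b₂ + c₂) (by simpa using hpos₂) hba₁ (by linarith)
  · obtain ⟨rfl, -⟩ := List.cons.inj h
    linarith
  · obtain ⟨rfl, rfl, rfl⟩ : b₂ = b₁ ∧ c₂ = c₁ ∧ Q₂ = Q₁ := by simpa using h
    exact ⟨_, .refl, .refl⟩
  · simp at hle

theorem Recolours.diamond (l m₁ m₂ : List ℝ) (h₁ : Recolours l m₁) (h₂ : Recolours l m₂) :
    ∃ d, ReflGen Recolours m₁ d ∧ ReflTransGen Recolours m₂ d := by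
  obtain ⟨hpos, s₁, hv₁, rfl, rfl⟩ := h₁
  obtain ⟨-, s₂, hv₂, hsrc, rfl⟩ := h₂
  rcases le_total s₁.pre.length s₂.pre.length with hle | hle
  · obtain ⟨d, hd₁, hd₂⟩ := Step.exists_join hv₁ hv₂ hsrc.symm hpos hle
    exact ⟨d, hd₁, hd₂.to_reflTransGen⟩
  · obtain ⟨d, hd₂, hd₁⟩ := Step.exists_join hv₂ hv₁ hsrc (hsrc ▸ hpos) hle
    exact ⟨d, hd₁, hd₂.to_reflTransGen⟩

theorem IsClosure.unique {l m₁ m₂ : List ℝ} (hl : ∀ x ∈ l, 0 < x) (h₁ : IsClosure l m₁)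
    (h₂ : IsClosure l m₂) : m₁ = m₂ := by
  obtain ⟨_, hr₁, hc₁⟩ := h₁
  obtain ⟨_, hr₂, hc₂⟩ := h₂
  obtain ⟨d, hd₁, hd₂⟩ := church_rosser Recolours.diamond
    (hr₁.reflTransGen_recolours hl) (hr₂.reflTransGen_recolours hl)
  rw [hc₁.eq_of_reflTransGen hd₁, hc₂.eq_of_reflTransGen hd₂]

theorem IsClosure.of_reduces {l l' m : List ℝ} {steps : List Step} (h : IsClosure l m)
    (hl : ∀ x ∈ l, 0 < x) (hr : Reduces l steps l') : IsClosure l' m := by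
  obtain ⟨m', steps', hr', hm'⟩ := exists_isClosure l'
  rw [h.unique hl ⟨_, hr.append hr', hm'⟩]
  exact ⟨steps', hr', hm'⟩

theorem IsClosure.append_cons_of_reduces {L₁ L₂ N₁ N₂ m : List ℝ} {B : ℝ}
    {steps₁ steps₂ : List Step} (h : IsClosure (L₁ ++ B :: L₂) m)
    (hpos : ∀ x ∈ L₁ ++ B :: L₂, 0 < x) (h₁ : Reduces L₁ steps₁ N₁)
    (h₂ : Reduces L₂ steps₂ N₂) : IsClosure (N₁ ++ B :: N₂) m := by
  obtain ⟨_, h₁'⟩ := h₁.exists_frame [] (B :: L₂)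
  obtain ⟨_, h₂'⟩ := h₂.exists_frame (N₁ ++ [B]) []
  simp only [List.nil_append, List.append_assoc, List.cons_append, List.append_nil] at h₁' h₂'
  exact h.of_reduces hpos (h₁'.append h₂')

/-- Since `L` and `R` are closed, every recolouring of `L ++ B :: R` involves the interval
grown from `B`. That interval `M` has swallowed `L₂`, `B` and `R₁`, and it is red exactly when
`L₁` has even length. -/
def TwoBlockInvariant (L R l : List ℝ) : Prop :=
  ∃ L₁ L₂ R₁ R₂ : List ℝ, ∃ M : ℝ, L = L₁ ++ L₂ ∧ R = R₁ ++ R₂ ∧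
    (L₁.length + R₁.length) % 2 = 1 ∧ l = L₁ ++ M :: R₂ ∧
    (L₁.length % 2 = 0 → M ≤ 2 * redSum L₂ + 2 * redSum R₁)

namespace TwoBlockInvariant

variable {L R : List ℝ}

theorem init (B : ℝ) (hL : L.length % 2 = 1) : TwoBlockInvariant L R (L ++ B :: R) :=
  ⟨L, [], [], R, B, by simp, by simp, by simpa, rfl, by omega⟩

theorem tgt {s : Step} (hinv : TwoBlockInvariant L R s.src) (hs : s.Valid)
    (hL : IsClosedConfig L) (hR : IsClosedConfig R) (hLpos : ∀ x ∈ L, 0 ≤ x)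
    (hRpos : ∀ x ∈ R, 0 ≤ x) : TwoBlockInvariant L R s.tgt := by
  obtain ⟨L₁, L₂, R₁, R₂, M, rfl, rfl, hpar, hl, hM⟩ := hinv
  obtain ⟨P, a, b, c, Q⟩ := s
  obtain ⟨hba, hbc⟩ := hs
  simp only [Step.src, Step.tgt] at hl hba hbc ⊢
  rcases append_cons_eq_window_cases hl.symm with
    ⟨E, rfl, -⟩ | ⟨rfl, rfl, rfl⟩ | ⟨rfl, rfl, rfl⟩ | ⟨rfl, rfl, rfl⟩ | ⟨E, rfl, rfl⟩
  · exact absurd (by simp [Step.src]) (hL ⟨P, a, b, c, E ++ L₂⟩ ⟨hba, hbc⟩)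
  · simp only [List.length_append, List.length_cons, List.length_nil] at hpar hM
    refine ⟨P, a :: b :: L₂, R₁, R₂, a + b + M, by simp, rfl, by omega, rfl, fun hP => ?_⟩
    have := hM (by omega)
    simp only [redSum_cons, blueSum_cons]
    linarith
  · simp only [List.length_append, List.length_cons, List.length_nil] at hpar
    refine ⟨P, a :: L₂, R₁ ++ [c], Q, a + M + c, by simp, by simp,
      by simp only [List.length_append, List.length_singleton]; omega, rfl,
      fun hP => ?_⟩
    have hR₁ : R₁.length % 2 = 0 := by omega
    have := blueSum_nonneg (l := L₂) fun x hx => hLpos x (by simp [hx])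
    have := redSum_nonneg (l := R₁) fun x hx => hRpos x (by simp [hx])
    have := hRpos c (by simp)
    simp only [redSum_cons, redSum_append, hR₁, if_true, blueSum_nil]
    linarith
  · refine ⟨L₁, L₂, R₁ ++ [b, c], Q, M + b + c, rfl, by simp,
      by simp only [List.length_append, List.length_cons, List.length_nil]; omega, rfl,
      fun hP => ?_⟩
    have hR₁ : R₁.length % 2 = 1 := by omega
    have := hM hP
    simp only [redSum_append, hR₁, one_ne_zero, ↓reduceIte, blueSum_cons, redSum_cons,
      blueSum_nil, add_zero]
    linarith
  · exact absurd (by simp [Step.src]) (hR ⟨R₁ ++ E, a, b, c, Q⟩ ⟨hba, hbc⟩)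

theorem reduces {l m : List ℝ} {steps : List Step} (hinv : TwoBlockInvariant L R l)
    (h : Reduces l steps m) (hL : IsClosedConfig L) (hR : IsClosedConfig R)
    (hLpos : ∀ x ∈ L, 0 ≤ x) (hRpos : ∀ x ∈ R, 0 ≤ x) : TwoBlockInvariant L R m := by
  induction h with
  | nil => exact hinv
  | cons s hs _ ih => exact ih (hinv.tgt hs hL hR hLpos hRpos)

theorem redSum_le {l : List ℝ} (hinv : TwoBlockInvariant L R l) (hLpos : ∀ x ∈ L, 0 ≤ x)
    (hRpos : ∀ x ∈ R, 0 ≤ x) : redSum l ≤ 2 * redSum L + 2 * redSum R := by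
  obtain ⟨L₁, L₂, R₁, R₂, M, rfl, rfl, hpar, rfl, hM⟩ := hinv
  have := redSum_nonneg (l := L₁) fun x hx => hLpos x (by simp [hx])
  have := redSum_nonneg (l := L₂) fun x hx => hLpos x (by simp [hx])
  have := blueSum_nonneg (l := L₂) fun x hx => hLpos x (by simp [hx])
  have := redSum_nonneg (l := R₁) fun x hx => hRpos x (by simp [hx])
  have := redSum_nonneg (l := R₂) fun x hx => hRpos x (by simp [hx])
  have := blueSum_nonneg (l := R₂) fun x hx => hRpos x (by simp [hx])
  rcases Nat.mod_two_eq_zero_or_one L₁.length with hL₁ | hL₁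
  · have hR₁ : R₁.length % 2 = 1 := by omega
    have := hM hL₁
    simp only [redSum_append, hL₁, ↓reduceIte, redSum_cons, hR₁, one_ne_zero]
    linarith
  · have hR₁ : R₁.length % 2 = 0 := by omega
    simp only [redSum_append, hL₁, one_ne_zero, ↓reduceIte, blueSum_cons, hR₁]
    linarith

end TwoBlockInvariant

theorem redSum_le_of_reduces_append_cons {L R m : List ℝ} {B : ℝ} {steps : List Step}
    (h : Reduces (L ++ B :: R) steps m) (hL : IsClosedConfig L) (hR : IsClosedConfig R)
    (hodd : L.length % 2 = 1) (hLpos : ∀ x ∈ L, 0 ≤ x) (hRpos : ∀ x ∈ R, 0 ≤ x) :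
    redSum m ≤ 2 * redSum L + 2 * redSum R :=
  ((TwoBlockInvariant.init B hodd).reduces h hL hR hLpos hRpos).redSum_le hLpos hRpos

theorem redSum_le_of_isClosure_append_cons {L R N₁ N₂ m : List ℝ} {B : ℝ}
    (h : IsClosure (L ++ B :: R) m) (hpos : ∀ x ∈ L ++ B :: R, 0 < x)
    (hL : IsClosure L N₁) (hR : IsClosure R N₂) (hodd : L.length % 2 = 1) :
    redSum m ≤ 2 * redSum N₁ + 2 * redSum N₂ := by
  obtain ⟨_, hr₁, hc₁⟩ := hL
  obtain ⟨_, hr₂, hc₂⟩ := hR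
  obtain ⟨_, hr, -⟩ := h.append_cons_of_reduces hpos hr₁ hr₂
  have hN₁ := hr₁.pos fun x hx => hpos x (by simp [hx])
  have hN₂ := hr₂.pos fun x hx => hpos x (by simp [hx])
  exact redSum_le_of_reduces_append_cons hr hc₁ hc₂ (by rw [hr₁.length_mod_two, hodd])
    (fun x hx => (hN₁ x hx).le) (fun x hx => (hN₂ x hx).le)

theorem mem_interleave {cs : List (List ℝ)} {bs : List ℝ} {x : ℝ} (h : x ∈ interleave cs bs) :
    (∃ c ∈ cs, x ∈ c) ∨ x ∈ bs := by
  induction cs, bs using interleave.induct with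
  | case1 => simp [interleave] at h
  | case2 c cs => exact .inl ⟨c, by simp, h⟩
  | case3 c cs b bs ih =>
    simp only [interleave, List.mem_append, List.mem_cons] at h
    rcases h with h | rfl | h
    · exact .inl ⟨c, by simp, h⟩
    · simp
    · rcases ih h with ⟨c', hc', h⟩ | h
      · exact .inl ⟨c', by simp [hc'], h⟩
      · simp [h]

theorem length_interleave_mod_two {cs : List (List ℝ)} {bs : List ℝ}
    (hlen : cs.length = bs.length + 1) (hodd : ∀ c ∈ cs, c.length % 2 = 1) :
    (interleave cs bs).length % 2 = 1 := by
  induction cs, bs using interleave.induct with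
  | case1 => simp at hlen
  | case2 c cs => exact hodd c (by simp)
  | case3 c cs b bs ih =>
    have := hodd c (by simp)
    have := ih (by simpa using hlen) fun c' hc' => hodd c' (by simp [hc'])
    simp only [interleave, List.length_append, List.length_cons]
    omega

theorem interleave_eq_take_append_cons_drop {cs : List (List ℝ)} {bs : List ℝ} {j : ℕ}
    (hc : j < cs.length) (hb : j < bs.length) :
    interleave cs bs = interleave (cs.take (j + 1)) (bs.take j) ++
      bs[j] :: interleave (cs.drop (j + 1)) (bs.drop (j + 1)) := by
  induction j generalizing cs bs with
  | zero =>
    obtain ⟨c, cs, rfl⟩ := List.exists_cons_of_length_pos hc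
    obtain ⟨b, bs, rfl⟩ := List.exists_cons_of_length_pos hb
    simp [interleave]
  | succ j ih =>
    obtain ⟨c, cs, rfl⟩ := List.exists_cons_of_length_pos (by omega : 0 < cs.length)
    obtain ⟨b, bs, rfl⟩ := List.exists_cons_of_length_pos (by omega : 0 < bs.length)
    simp only [List.length_cons, Nat.add_lt_add_iff_right] at hc hb
    simp [interleave, ih hc hb]

theorem sum_map_redSum_nonneg {cs ms : List (List ℝ)} (hms : List.Forall₂ IsClosure cs ms)
    (hpos : ∀ c ∈ cs, ∀ x ∈ c, 0 < x) : 0 ≤ (ms.map redSum).sum := by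
  induction hms with
  | nil => simp
  | cons hcm _ ih =>
    rw [List.map_cons, List.sum_cons]
    exact add_nonneg (redSum_nonneg fun x hx => (hcm.pos (hpos _ (by simp)) x hx).le)
      (ih fun c hc => hpos c (by simp [hc]))

theorem pos_of_mem_interleave {cs : List (List ℝ)} {bs : List ℝ}
    (hposc : ∀ c ∈ cs, ∀ x ∈ c, 0 < x) (hposb : ∀ x ∈ bs, 0 < x) {x : ℝ}
    (hx : x ∈ interleave cs bs) : 0 < x := by
  rcases mem_interleave hx with ⟨c, hc, hx⟩ | hx
  exacts [hposc c hc x hx, hposb x hx]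

theorem redSum_le_of_isClosure_interleave_halves {cs : List (List ℝ)} {bs : List ℝ}
    {m : List ℝ} {j : ℕ} {r₁ r₂ : ℝ} (hc : j < cs.length) (hb : j < bs.length)
    (hodd : ∀ c ∈ cs, c.length % 2 = 1) (hposc : ∀ c ∈ cs, ∀ x ∈ c, 0 < x)
    (hposb : ∀ x ∈ bs, 0 < x) (hm : IsClosure (interleave cs bs) m)
    (h₁ : ∀ N, IsClosure (interleave (cs.take (j + 1)) (bs.take j)) N → redSum N ≤ r₁)
    (h₂ : ∀ N, IsClosure (interleave (cs.drop (j + 1)) (bs.drop (j + 1))) N → redSum N ≤ r₂) :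
    redSum m ≤ 2 * r₁ + 2 * r₂ := by
  have hpos := fun x => pos_of_mem_interleave hposc hposb (x := x)
  rw [interleave_eq_take_append_cons_drop hc hb] at hm hpos
  obtain ⟨N₁, hN₁⟩ := exists_isClosure (interleave (cs.take (j + 1)) (bs.take j))
  obtain ⟨N₂, hN₂⟩ := exists_isClosure (interleave (cs.drop (j + 1)) (bs.drop (j + 1)))
  have hodd₁ := length_interleave_mod_two (cs := cs.take (j + 1)) (bs := bs.take j)
    (by simp only [List.length_take]; omega) fun c hc => hodd c (List.mem_of_mem_take hc)
  linarith [redSum_le_of_isClosure_append_cons hm hpos hN₁ hN₂ hodd₁, h₁ N₁ hN₁, h₂ N₂ hN₂]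

theorem redSum_le_of_isClosure_interleave (n : ℕ) {cs : List (List ℝ)} {bs : List ℝ}
    {ms : List (List ℝ)} {m : List ℝ} (hk : cs.length ≤ 2 ^ n)
    (hlen : cs.length = bs.length + 1) (hodd : ∀ c ∈ cs, c.length % 2 = 1)
    (hposc : ∀ c ∈ cs, ∀ x ∈ c, 0 < x) (hposb : ∀ x ∈ bs, 0 < x)
    (hms : List.Forall₂ IsClosure cs ms) (hm : IsClosure (interleave cs bs) m) :
    redSum m ≤ 2 ^ n * (ms.map redSum).sum := by
  induction n generalizing cs bs ms m with
  | zero =>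
    obtain ⟨c, rfl⟩ := List.length_eq_one_iff.1 (by rw [pow_zero] at hk; omega : cs.length = 1)
    obtain rfl : bs = [] := List.eq_nil_of_length_eq_zero (by simpa using hlen)
    obtain ⟨mc, hmc, rfl⟩ : ∃ mc, IsClosure c mc ∧ ms = [mc] := by
      rcases hms with _ | ⟨hmc, hnil⟩
      exact ⟨_, hmc, by rw [List.forall₂_nil_left_iff.1 hnil]⟩
    simp [hm.unique (fun x => pos_of_mem_interleave hposc hposb) hmc]
  | succ n ih =>
    by_cases hkn : cs.length ≤ 2 ^ n
    · calc redSum m ≤ 2 ^ n * (ms.map redSum).sum := ih hkn hlen hodd hposc hposb hms hm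
        _ ≤ 2 ^ (n + 1) * (ms.map redSum).sum := by
          gcongr
          · exact sum_map_redSum_nonneg hms hposc
          · norm_num
          · omega
    obtain ⟨j, hj⟩ : ∃ j, 2 ^ n = j + 1 :=
      ⟨2 ^ n - 1, (Nat.sub_add_cancel Nat.one_le_two_pow).symm⟩
    rw [pow_succ] at hk
    have hS : (ms.map redSum).sum =
        ((ms.take (j + 1)).map redSum).sum + ((ms.drop (j + 1)).map redSum).sum := by
      rw [← List.sum_append, ← List.map_append, List.take_append_drop]
    have h₁ := fun N (hN : IsClosure (interleave (cs.take (j + 1)) (bs.take j)) N) =>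
      ih (by rw [List.length_take]; omega) (by simp only [List.length_take]; omega)
        (fun c hc => hodd c (List.mem_of_mem_take hc))
        (fun c hc => hposc c (List.mem_of_mem_take hc))
        (fun x hx => hposb x (List.mem_of_mem_take hx)) (List.forall₂_take _ hms) hN
    have h₂ := fun N (hN : IsClosure (interleave (cs.drop (j + 1)) (bs.drop (j + 1))) N) =>
      ih (by rw [List.length_drop]; omega) (by simp only [List.length_drop]; omega)
        (fun c hc => hodd c (List.mem_of_mem_drop hc))
        (fun c hc => hposc c (List.mem_of_mem_drop hc))
        (fun x hx => hposb x (List.mem_of_mem_drop hx)) (List.forall₂_drop _ hms) hN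
    calc redSum m ≤ 2 * (2 ^ n * ((ms.take (j + 1)).map redSum).sum) +
          2 * (2 ^ n * ((ms.drop (j + 1)).map redSum).sum) :=
          redSum_le_of_isClosure_interleave_halves (by omega) (by omega) hodd hposc hposb hm h₁ h₂
      _ = 2 ^ (n + 1) * (ms.map redSum).sum := by rw [hS]; ring

theorem redContent_interleave_le_general
    (k : ℕ) (cs : List (List ℝ)) (bs : List ℝ)
    (hcs : cs.length = k) (hbs : bs.length + 1 = k)
    (hodd : ∀ c ∈ cs, c.length % 2 = 1)
    (hposc : ∀ c ∈ cs, ∀ x ∈ c, 0 < x) (hposb : ∀ x ∈ bs, 0 < x)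
    (ms : List (List ℝ))
    (hred : List.Forall₂
      (fun c mc => ∃ sc : List Step, Reduces c sc mc ∧ IsClosedConfig mc) cs ms)
    (s : List Step) (m : List ℝ)
    (h : Reduces (interleave cs bs) s m) (hc : IsClosedConfig m) :
    redSum m ≤ 2 ^ Nat.clog 2 k * (ms.map redSum).sum :=
  redSum_le_of_isClosure_interleave _ (hcs ▸ Nat.le_pow_clog one_lt_two k) (by omega) hodd
    hposc hposb hred ⟨s, h, hc⟩

/-- If `C₁, …, C_k` are red-ended coloured-intervals and
`B₁, …, B_{k-1}` are blue intervals, then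
`r(C₁ + B₁ + C₂ + … + B_{k-1} + C_k) ≤ 2^⌈log₂ k⌉ · Σᵢ r(Cᵢ)`. -/
theorem redContent_interleave_le
    (k : ℕ) (hk : 1 ≤ k) (cs : List (List ℝ)) (bs : List ℝ)
    (hcs : cs.length = k) (hbs : bs.length + 1 = k)
    (hodd : ∀ c ∈ cs, c.length % 2 = 1)
    (hposc : ∀ c ∈ cs, ∀ x ∈ c, 0 < x) (hposb : ∀ x ∈ bs, 0 < x)
    (hnd : Nondegenerate (interleave cs bs))
    (ms : List (List ℝ))
    (hred : List.Forall₂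
      (fun c mc => ∃ sc : List Step, Reduces c sc mc ∧ IsClosedConfig mc) cs ms)
    (s : List Step) (m : List ℝ)
    (h : Reduces (interleave cs bs) s m) (hc : IsClosedConfig m) :
    redSum m ≤ 2 ^ Nat.clog 2 k * (ms.map redSum).sum :=
  redContent_interleave_le_general k cs bs hcs hbs hodd hposc hposb ms hred s m h hc
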